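/- arXiv:2412.14269 — 4 statements merged into one kernel-verified Lean document; each statement's English description precedes it below -/
import Mathlib

section
/- In the primal-dual penalty method with updates c_{n+1} = c_n + s_n[ω(dist(0, Φ(x_n))) + δ_n], s_n ≥ s* > 0, δ_n ≥ 0, if the penalty function F(·, c_0) is bounded below on Q, then dist(0, Φ(x_n)) → 0 as n → ∞. -/
/-!
Testing the near-optimality of `x n` against a feasible point `x̄` and subtracting the lower
bound on `F(·, c 0)` gives `(c n - c 0) · ω(dist(0, Φ(x n))) ≤ M` for a fixed `M`. If the
penalties `ω(dist(0, Φ(x n)))` were not summable, the updates would force `c n → ∞`, and the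
bound would squeeze the penalties to `0` anyway; either way they tend to `0`, and since `ω` is
strictly increasing near `0`, so do the distances.
-/

open Filter Topology Metric Set

theorem mul_sum_range_le_sub_of_add_mul_le_succ {c w : ℕ → ℝ} {s : ℝ}
    (hc : ∀ n, c n + s * w n ≤ c (n + 1)) (n : ℕ) :
    s * ∑ k ∈ Finset.range n, w k ≤ c n - c 0 := by
  rw [← Finset.sum_range_sub, Finset.mul_sum]
  exact Finset.sum_le_sum fun k _ => by linarith [hc k]

theorem tendsto_zero_of_mul_sub_le_of_add_mul_le_succ {c w : ℕ → ℝ} {s M : ℝ} (hs : 0 < s)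
    (hw : ∀ n, 0 ≤ w n) (hc : ∀ n, c n + s * w n ≤ c (n + 1))
    (hM : ∀ n, (c n - c 0) * w n ≤ M) :
    Tendsto w atTop (𝓝 0) := by
  by_cases hsum : Summable w
  · exact hsum.tendsto_atTop_zero
  have hsums : Tendsto (fun n => ∑ k ∈ Finset.range n, w k) atTop atTop :=
    (not_summable_iff_tendsto_nat_atTop_of_nonneg hw).1 hsum
  have hgrowth : Tendsto (fun n => c n - c 0) atTop atTop :=
    tendsto_atTop_mono (mul_sum_range_le_sub_of_add_mul_le_succ hc) (hsums.const_mul_atTop hs)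
  have hbound : ∀ᶠ n in atTop, w n ≤ M / (c n - c 0) :=
    (hgrowth.eventually_gt_atTop 0).mono fun n hn => by
      rw [le_div_iff₀ hn, mul_comm]
      exact hM n
  exact tendsto_of_tendsto_of_tendsto_of_le_of_le' tendsto_const_nhds
    (tendsto_const_nhds.div_atTop hgrowth) (Eventually.of_forall hw) hbound

theorem tendsto_zero_of_tendsto_comp_zero {α : Type*} {l : Filter α} {d : α → ℝ}
    {ω : ℝ → ℝ} {τ : ℝ} (hτ : 0 < τ) (hω0 : ω 0 = 0) (hmono : MonotoneOn ω (Ici 0))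
    (hstrict : StrictMonoOn ω (Ico 0 τ)) (hd : ∀ a, 0 ≤ d a)
    (hωd : Tendsto (fun a => ω (d a)) l (𝓝 0)) :
    Tendsto d l (𝓝 0) := by
  refine tendsto_order.2 ⟨fun ε hε => Eventually.of_forall fun a => hε.trans_le (hd a),
    fun ε hε => ?_⟩
  set ε' := min ε (τ / 2)
  have hε' : 0 < ε' := lt_min hε (half_pos hτ)
  have hωε' : 0 < ω ε' := by
    rw [← hω0]
    exact hstrict ⟨le_rfl, hτ⟩ ⟨hε'.le, (min_le_right _ _).trans_lt (half_lt_self hτ)⟩ hε'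
  filter_upwards [(tendsto_order.1 hωd).2 _ hωε'] with a ha
  by_contra! hεa
  exact (hmono hε'.le (hd a) ((min_le_left _ _).trans hεa)).not_gt ha

theorem penalty_infeasibility_tendsto_zero_general
    {X Y : Type*} [MetricSpace X] [NormedAddCommGroup Y]
    (Q : Set X)
    (f : X → ℝ) (Φ : X → Set Y)
    (ω : ℝ → ℝ) (hωnn : ∀ t, 0 ≤ ω t) (hω0 : ω 0 = 0)
    (hmono : MonotoneOn ω (Ici 0))
    (τ : ℝ) (hτ : 0 < τ)
    (hstrict : StrictMonoOn ω (Ico 0 τ))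
    (hfeas : {x | x ∈ Q ∧ (0 : Y) ∈ Φ x}.Nonempty)
    (xs : ℕ → X) (cs : ℕ → ℝ) (εs ss δs : ℕ → ℝ) (sstar : ℝ)
    (hbdd : BddBelow ((fun x => f x + cs 0 * ω (infDist (0 : Y) (Φ x))) '' Q))
    (hεb : BddAbove (Set.range εs))
    (hsstar : 0 < sstar) (hss : ∀ n, sstar ≤ ss n) (hδ : ∀ n, 0 ≤ δs n)
    (hupd : ∀ n, cs (n + 1) = cs n + ss n * (ω (infDist (0 : Y) (Φ (xs n))) + δs n))
    (hxQ : ∀ n, xs n ∈ Q)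
    (hopt : ∀ n, ∀ x ∈ Q,
      f (xs n) + cs n * ω (infDist (0 : Y) (Φ (xs n))) ≤
        f x + cs n * ω (infDist (0 : Y) (Φ x)) + εs n) :
    Tendsto (fun n => infDist (0 : Y) (Φ (xs n))) atTop (𝓝 0) := by
  obtain ⟨xf, hxfQ, hxf0⟩ := hfeas
  obtain ⟨E, hE⟩ := hεb
  obtain ⟨B, hB⟩ := hbdd
  have hgain : ∀ n, (cs n - cs 0) * ω (infDist (0 : Y) (Φ (xs n))) ≤ f xf + E - B := by
    intro n
    have hnear := hopt n xf hxfQ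
    rw [infDist_zero_of_mem hxf0, hω0, mul_zero, add_zero] at hnear
    have hlow := hB ⟨xs n, hxQ n, rfl⟩
    have hεn := hE ⟨n, rfl⟩
    rw [sub_mul]
    linarith
  have hstep : ∀ n, cs n + sstar * ω (infDist (0 : Y) (Φ (xs n))) ≤ cs (n + 1) := fun n => by
    rw [hupd n]
    gcongr cs n + ?_
    exact mul_le_mul (hss n) (le_add_of_nonneg_right (hδ n)) (hωnn _) (hsstar.le.trans (hss n))
  exact tendsto_zero_of_tendsto_comp_zero hτ hω0 hmono hstrict (fun n => infDist_nonneg)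
    (tendsto_zero_of_mul_sub_le_of_add_mul_le_succ hsstar (fun n => hωnn _) hstep hgain)

/-- in the primal-dual penalty method with updates
c_{n+1} = c_n + s_n [ω(dist(0, Φ(x_n))) + δ_n], s_n ≥ s* > 0, δ_n ≥ 0, if the penalty
function F(·, c_0) is bounded below on Q, then dist(0, Φ(x_n)) → 0. -/
theorem penalty_infeasibility_tendsto_zero
    {X Y : Type*} [MetricSpace X] [NormedAddCommGroup Y]
    (Q : Set X) (hQne : Q.Nonempty) (hQc : IsClosed Q)
    (f : X → ℝ) (Φ : X → Set Y)
    (ω : ℝ → ℝ) (hωnn : ∀ t, 0 ≤ ω t) (hω0 : ω 0 = 0)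
    (hmono : MonotoneOn ω (Ici 0))
    (τ : ℝ) (hτ : 0 < τ)
    (hstrict : StrictMonoOn ω (Ico 0 τ)) (hcont : ContinuousOn ω (Ico 0 τ))
    (hfeas : {x | x ∈ Q ∧ (0 : Y) ∈ Φ x}.Nonempty)
    (hfb : BddBelow (f '' {x | x ∈ Q ∧ (0 : Y) ∈ Φ x}))
    (xs : ℕ → X) (cs : ℕ → ℝ) (εs ss δs : ℕ → ℝ) (sstar : ℝ)
    (hc0 : 0 ≤ cs 0)
    (hbdd : BddBelow ((fun x => f x + cs 0 * ω (infDist (0 : Y) (Φ x))) '' Q))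
    (hε0 : ∀ n, 0 ≤ εs n) (hεb : BddAbove (Set.range εs))
    (hsstar : 0 < sstar) (hss : ∀ n, sstar ≤ ss n) (hδ : ∀ n, 0 ≤ δs n)
    (hupd : ∀ n, cs (n + 1) = cs n + ss n * (ω (infDist (0 : Y) (Φ (xs n))) + δs n))
    (hxQ : ∀ n, xs n ∈ Q)
    (hopt : ∀ n, ∀ x ∈ Q,
      f (xs n) + cs n * ω (infDist (0 : Y) (Φ (xs n))) ≤
        f x + cs n * ω (infDist (0 : Y) (Φ x)) + εs n) :
    Tendsto (fun n => infDist (0 : Y) (Φ (xs n))) atTop (𝓝 0) :=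
  penalty_infeasibility_tendsto_zero_general Q f Φ ω hωnn hω0 hmono τ hτ hstrict hfeas xs cs εs ss
    δs sstar hbdd hεb hsstar hss hδ hupd hxQ hopt
end

section
/- In the primal-dual rounded weighted ℓ₁-penalty method, suppose F(·, μ_0) is bounded below and the step sizes satisfy either s_n ≥ s* > 0 for all n, or s_n ≥ ω(‖p_n‖) for a nondecreasing function ω : ℝ₊ → ℝ₊ with ω(t) > 0 for t > 0. Then the infeasibility measure Σᵢ |hᵢ(x_n)| + Σⱼ max{0, gⱼ(x_n)} converges to 0 as n → ∞. -/
/-!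
Write all constraints as one residual vector `r = (h, max g 0)`; since `γ(t, w) = η(max t 0, w)`,
the penalty becomes `f + Σₐ yₐ η(rₐ, w)`. Comparing `xₙ` with a feasible point `x*` (where the
penalty vanishes) and using that `η` decreases in `w`, weak duality bounds
`Σₐ (yₙ - y₀)ₐ η(rₐ(xₙ), wₙ)` by `f(x*) + sup ε - inf F(·, μ₀)`. The dual updates give
`(yₙ - y₀)ₐ ≥ Σ_{k<n} s_k η(rₐ(x_k), w_k)`, so `(Σ_{k<n} s_k ηₖₐ) ηₙₐ` stays bounded; as the steps
are bounded below whenever `ηₙₐ ≥ ε`, this forces `ηₙₐ → 0`, and `|t| ≤ 2η + √(2 w₀ η)` turns this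
into `rₐ(xₙ) → 0`.
-/

open Filter Topology Metric Set

/-- Smoothed absolute value: η(t, w) = t²/(2w) if |t| < w, |t| − w/2 otherwise. -/
noncomputable def eta (t w : ℝ) : ℝ := if |t| < w then t ^ 2 / (2 * w) else |t| - w / 2

/-- Smoothed positive part. -/
noncomputable def gam (t w : ℝ) : ℝ :=
  if t ≤ 0 then 0 else if t < w then t ^ 2 / (2 * w) else t - w / 2

lemma eta_nonneg (t w : ℝ) : 0 ≤ eta t w := by
  unfold eta
  split_ifs with h
  · have : 0 < w := (abs_nonneg t).trans_lt h
    positivity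
  · linarith [not_lt.1 h, abs_nonneg t]

lemma eta_zero_left {w : ℝ} (hw : 0 ≤ w) : eta 0 w = 0 := by
  rcases hw.eq_or_lt with rfl | hw <;> simp [eta, *]

lemma eta_antitoneOn (t : ℝ) : AntitoneOn (eta t) (Ici 0) := by
  intro w' hw' w _ hle
  unfold eta
  split_ifs with h h' h'
  · have : 0 < w' := (abs_nonneg t).trans_lt h'
    rw [div_le_div_iff₀ (by linarith) (by linarith)]
    nlinarith [sq_nonneg t]
  · have : 0 < w := (abs_nonneg t).trans_lt h
    rw [div_le_iff₀ (by linarith)]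
    nlinarith [sq_abs t, abs_nonneg t, not_lt.1 h']
  · exact absurd (h'.trans_le hle) h
  · linarith

lemma gam_eq_eta_max {w : ℝ} (hw : 0 ≤ w) (t : ℝ) : gam t w = eta (max t 0) w := by
  rcases le_or_gt t 0 with ht | ht
  · rw [max_eq_right ht, eta_zero_left hw, gam, if_pos ht]
  · rw [max_eq_left ht.le, gam, eta, if_neg ht.not_ge, abs_of_pos ht]

/-- In the quadratic regime `t² = 2wη`, otherwise `|t| = η + w/2 ≤ 2η`. -/
lemma abs_le_eta {t w W : ℝ} (hwW : w ≤ W) :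
    |t| ≤ 2 * eta t w + √(2 * W * eta t w) := by
  have hη := eta_nonneg t w
  have hsqrt := Real.sqrt_nonneg (2 * W * eta t w)
  by_cases h : |t| < w
  · have hη' : eta t w = t ^ 2 / (2 * w) := if_pos h
    have : t ^ 2 ≤ 2 * W * eta t w := by
      rw [hη', mul_div_assoc', le_div_iff₀ (by linarith [abs_nonneg t])]
      nlinarith [sq_nonneg t]
    linarith [Real.abs_le_sqrt this]
  · have hη' : eta t w = |t| - w / 2 := if_neg h
    linarith [not_lt.1 h]

lemma tendsto_zero_of_tendsto_eta {t w : ℕ → ℝ} {W : ℝ} (hwW : ∀ n, w n ≤ W)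
    (hη : Tendsto (fun n => eta (t n) (w n)) atTop (𝓝 0)) : Tendsto t atTop (𝓝 0) := by
  refine squeeze_zero_norm (fun n => abs_le_eta (hwW n)) ?_
  simpa using (hη.const_mul 2).add ((hη.const_mul (2 * W)).sqrt)

/-- If `a n ≥ ε` infinitely often, the monotone partial sums of `s k * a k` are at most `C / ε`
at those times, hence summable; but there `s n * a n ≥ c ε`. -/
lemma tendsto_zero_of_sum_range_mul_le {a s : ℕ → ℝ} {C : ℝ} (ha : ∀ n, 0 ≤ a n)
    (hs : ∀ n, 0 ≤ s n) (hC : ∀ n, (∑ k ∈ Finset.range n, s k * a k) * a n ≤ C)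
    (hstep : ∀ ε > 0, ∃ c > 0, ∀ n, ε ≤ a n → c ≤ s n) : Tendsto a atTop (𝓝 0) := by
  refine tendsto_order.2
    ⟨fun b hb => Eventually.of_forall fun k => hb.trans_le (ha k), fun ε hε => ?_⟩
  by_contra hfreq
  simp only [not_eventually, not_lt] at hfreq
  obtain ⟨c, hc, hcs⟩ := hstep ε hε
  have hsa : ∀ n, 0 ≤ s n * a n := fun n => mul_nonneg (hs n) (ha n)
  have hsum : Summable fun n => s n * a n := by
    refine summable_of_sum_range_le hsa (c := C / ε) fun n => ?_
    obtain ⟨N, hnN, hN⟩ := frequently_atTop.1 hfreq n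
    have hSN := Finset.sum_nonneg fun k (_ : k ∈ Finset.range N) => hsa k
    calc ∑ k ∈ Finset.range n, s k * a k ≤ ∑ k ∈ Finset.range N, s k * a k :=
          Finset.sum_le_sum_of_subset_of_nonneg (Finset.range_mono hnN) fun k _ _ => hsa k
      _ ≤ C / ε := by
          rw [le_div_iff₀ hε]
          exact (mul_le_mul_of_nonneg_left hN hSN).trans (hC N)
  obtain ⟨n, hn, hsmall⟩ := (hfreq.and_eventually
    (hsum.tendsto_atTop_zero.eventually (gt_mem_nhds (mul_pos hc hε)))).exists
  exact hsmall.not_ge (mul_le_mul (hcs n hn) hn hε.le (hs n))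

lemma exists_pos_le_step {ι : Type*} [Fintype ι] {p : ℕ → ι → ℝ} {s : ℕ → ℝ}
    (hstep : (∃ sstar : ℝ, 0 < sstar ∧ ∀ n, sstar ≤ s n) ∨
      (∃ ω : ℝ → ℝ, MonotoneOn ω (Ici 0) ∧ (∀ t, 0 < t → 0 < ω t) ∧
        ∀ n, ω √(∑ a, p n a ^ 2) ≤ s n)) :
    ∀ ε > 0, ∃ c > 0, ∀ n a, ε ≤ p n a → c ≤ s n := by
  intro ε hε
  rcases hstep with ⟨sstar, hsstar, hs⟩ | ⟨ω, hω, hωpos, hs⟩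
  · exact ⟨sstar, hsstar, fun n _ _ => hs n⟩
  refine ⟨ω ε, hωpos ε hε, fun n a hn => (hω hε.le (Real.sqrt_nonneg _) ?_).trans (hs n)⟩
  have hsq : p n a ^ 2 ≤ ∑ b, p n b ^ 2 :=
    Finset.single_le_sum (f := fun b => p n b ^ 2) (fun b _ => sq_nonneg _) (Finset.mem_univ a)
  exact hn.trans ((le_abs_self _).trans (Real.abs_le_sqrt hsq))

section Penalty

variable {X ι κ : Type*} [Fintype ι]

noncomputable def smoothedPenalty (f : X → ℝ) (r : X → ι → ℝ) (w : ℝ) (y : ι → ℝ) (x : X) : ℝ :=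
  f x + ∑ a, y a * eta (r x a) w

lemma smoothedPenalty_of_eq_zero {f : X → ℝ} {r : X → ι → ℝ} {w : ℝ} {y : ι → ℝ} {x : X}
    (hw : 0 ≤ w) (hx : r x = 0) : smoothedPenalty f r w y x = f x := by
  simp [smoothedPenalty, hx, eta_zero_left hw]

lemma sum_sub_mul_eta_le_smoothedPenalty_sub {f : X → ℝ} {r : X → ι → ℝ} {w w₀ : ℝ}
    {y y₀ : ι → ℝ} {x : X} (hw : 0 ≤ w) (hww₀ : w ≤ w₀) (hy₀ : 0 ≤ y₀) :
    ∑ a, (y a - y₀ a) * eta (r x a) w ≤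
      smoothedPenalty f r w y x - smoothedPenalty f r w₀ y₀ x := by
  have : ∑ a, y₀ a * eta (r x a) w₀ ≤ ∑ a, y₀ a * eta (r x a) w :=
    Finset.sum_le_sum fun a _ =>
      mul_le_mul_of_nonneg_left (eta_antitoneOn _ hw (hw.trans hww₀) hww₀) (hy₀ a)
  simp only [smoothedPenalty, sub_mul, Finset.sum_sub_distrib]
  linarith

theorem tendsto_residual_of_dual_ascent {f : X → ℝ} {r : X → ι → ℝ} {Q : Set X} {xstar : X}
    {xs : ℕ → X} {y : ℕ → ι → ℝ} {ws ss εs : ℕ → ℝ}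
    (hxstar : r xstar = 0) (hy0 : 0 ≤ y 0)
    (hy : ∀ n a, y n a + ss n * eta (r (xs n) a) (ws n) ≤ y (n + 1) a)
    (hw : Antitone ws) (hw0 : ∀ n, 0 ≤ ws n) (hs : ∀ n, 0 ≤ ss n) (hε : BddAbove (range εs))
    (hxQ : ∀ n, xs n ∈ Q) (hbdd : BddBelow (smoothedPenalty f r (ws 0) (y 0) '' Q))
    (hopt : ∀ n, smoothedPenalty f r (ws n) (y n) (xs n) ≤
      smoothedPenalty f r (ws n) (y n) xstar + εs n)
    (hstep : ∀ ε > 0, ∃ c > 0, ∀ n a, ε ≤ eta (r (xs n) a) (ws n) → c ≤ ss n) (a : ι) :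
    Tendsto (fun n => r (xs n) a) atTop (𝓝 0) := by
  obtain ⟨B, hB⟩ := hbdd
  obtain ⟨M, hM⟩ := hε
  set p : ℕ → ι → ℝ := fun n b => eta (r (xs n) b) (ws n)
  have hp : ∀ n b, 0 ≤ p n b := fun _ _ => eta_nonneg _ _
  have hgain : ∀ n b, ∑ k ∈ Finset.range n, ss k * p k b ≤ y n b - y 0 b := fun n b => by
    rw [← Finset.sum_range_sub (y · b)]
    exact Finset.sum_le_sum fun k _ => by linarith [hy k b]
  have hdual : ∀ n, ∑ b, (y n b - y 0 b) * p n b ≤ f xstar + M - B := fun n => by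
    have hsub := sum_sub_mul_eta_le_smoothedPenalty_sub (f := f) (r := r) (x := xs n) (y := y n)
      (hw0 n) (hw (Nat.zero_le n)) hy0
    have hoptn := hopt n
    rw [smoothedPenalty_of_eq_zero (hw0 n) hxstar] at hoptn
    linarith [hB (mem_image_of_mem _ (hxQ n)), hM (mem_range_self n)]
  refine tendsto_zero_of_tendsto_eta (fun n => hw (Nat.zero_le n))
    (tendsto_zero_of_sum_range_mul_le (C := f xstar + M - B) (hp · a) hs (fun n => ?_)
      fun ε hε => (hstep ε hε).imp fun c ⟨hc, hcs⟩ => ⟨hc, fun n => hcs n a⟩)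
  have hterm : ∀ b, 0 ≤ (y n b - y 0 b) * p n b := fun b =>
    mul_nonneg ((Finset.sum_nonneg fun k _ => mul_nonneg (hs k) (hp k b)).trans (hgain n b))
      (hp n b)
  calc (∑ k ∈ Finset.range n, ss k * p k a) * p n a ≤ (y n a - y 0 a) * p n a :=
        mul_le_mul_of_nonneg_right (hgain n a) (hp n a)
    _ ≤ ∑ b, (y n b - y 0 b) * p n b :=
        Finset.single_le_sum (f := fun b => (y n b - y 0 b) * p n b) (fun b _ => hterm b)
          (Finset.mem_univ a)
    _ ≤ f xstar + M - B := hdual n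

variable [Fintype κ]

def violation (h : X → ι → ℝ) (g : X → κ → ℝ) (x : X) : ι ⊕ κ → ℝ :=
  Sum.elim (h x) fun j => max (g x j) 0

lemma sum_mul_eta_violation {h : X → ι → ℝ} {g : X → κ → ℝ} {w : ℝ} (hw : 0 ≤ w)
    (u : ι → ℝ) (v : κ → ℝ) (x : X) :
    ∑ a, Sum.elim u v a * eta (violation h g x a) w =
      ∑ i, u i * eta (h x i) w + ∑ j, v j * gam (g x j) w := by
  simp [Fintype.sum_sum_type, violation, gam_eq_eta_max hw]

lemma sum_eta_violation_sq {h : X → ι → ℝ} {g : X → κ → ℝ} {w : ℝ} (hw : 0 ≤ w) (x : X) :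
    ∑ a, eta (violation h g x a) w ^ 2 = ∑ i, eta (h x i) w ^ 2 + ∑ j, gam (g x j) w ^ 2 := by
  simp [Fintype.sum_sum_type, violation, gam_eq_eta_max hw]

end Penalty

theorem rounded_weighted_penalty_infeasibility_general
    {X : Type*} {m l : ℕ}
    (Q : Set X)
    (f : X → ℝ) (h : X → Fin m → ℝ) (g : X → Fin l → ℝ)
    (hfeas : {x | x ∈ Q ∧ (∀ i, h x i = 0) ∧ ∀ j, g x j ≤ 0}.Nonempty)
    (xs : ℕ → X) (us : ℕ → Fin m → ℝ) (vs : ℕ → Fin l → ℝ) (ws : ℕ → ℝ)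
    (ss : ℕ → ℝ) (dus : ℕ → Fin m → ℝ) (dvs : ℕ → Fin l → ℝ) (εs : ℕ → ℝ)
    (hu0 : ∀ i, 0 ≤ us 0 i) (hv0 : ∀ j, 0 ≤ vs 0 j)
    (hwmono : ∀ n, ws (n + 1) ≤ ws n) (hwnn : ∀ n, 0 ≤ ws n)
    (hεb : BddAbove (Set.range εs))
    (hspos : ∀ n, 0 < ss n) (hdu : ∀ n i, 0 ≤ dus n i) (hdv : ∀ n j, 0 ≤ dvs n j)
    (huupd : ∀ n i, us (n + 1) i = us n i + ss n * (eta (h (xs n) i) (ws n) + dus n i))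
    (hvupd : ∀ n j, vs (n + 1) j = vs n j + ss n * (gam (g (xs n) j) (ws n) + dvs n j))
    (hxQ : ∀ n, xs n ∈ Q)
    (hbdd : BddBelow ((fun x => f x + ∑ i, us 0 i * eta (h x i) (ws 0)
        + ∑ j, vs 0 j * gam (g x j) (ws 0)) '' Q))
    (hopt : ∀ n, ∀ x ∈ Q,
      f (xs n) + ∑ i, us n i * eta (h (xs n) i) (ws n)
          + ∑ j, vs n j * gam (g (xs n) j) (ws n) ≤
        f x + ∑ i, us n i * eta (h x i) (ws n)
          + ∑ j, vs n j * gam (g x j) (ws n) + εs n)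
    (hstep : (∃ sstar : ℝ, 0 < sstar ∧ ∀ n, sstar ≤ ss n) ∨
      (∃ ω : ℝ → ℝ, MonotoneOn ω (Ici 0) ∧ (∀ t, 0 ≤ ω t) ∧ (∀ t, 0 < t → 0 < ω t) ∧
        ∀ n, ω (Real.sqrt (∑ i, (eta (h (xs n) i) (ws n)) ^ 2
          + ∑ j, (gam (g (xs n) j) (ws n)) ^ 2)) ≤ ss n)) :
    Tendsto (fun n => ∑ i, |h (xs n) i| + ∑ j, max 0 (g (xs n) j)) atTop (𝓝 0) := by
  obtain ⟨xstar, hxstarQ, hhx, hgx⟩ := hfeas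
  have hpen : ∀ n x, f x + ∑ i, us n i * eta (h x i) (ws n) + ∑ j, vs n j * gam (g x j) (ws n) =
      smoothedPenalty f (violation h g) (ws n) (Sum.elim (us n) (vs n)) x := fun n x => by
    rw [smoothedPenalty, sum_mul_eta_violation (hwnn n), add_assoc]
  simp only [← sum_eta_violation_sq (hwnn _)] at hstep
  have hgrowth : ∀ n a, Sum.elim (us n) (vs n) a + ss n * eta (violation h g (xs n) a) (ws n) ≤
      Sum.elim (us (n + 1)) (vs (n + 1)) a := by
    rintro n (i | j)
    · simp only [Sum.elim_inl, violation, huupd]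
      nlinarith [hspos n, hdu n i]
    · simp only [Sum.elim_inr, violation, hvupd, gam_eq_eta_max (hwnn n)]
      nlinarith [hspos n, hdv n j]
  have hres := tendsto_residual_of_dual_ascent (Q := Q) (xstar := xstar)
    (y := fun n => Sum.elim (us n) (vs n)) (ss := ss)
    (funext <| Sum.rec (fun i => hhx i) fun j => max_eq_right (hgx j))
    (fun a => a.rec hu0 hv0) hgrowth (antitone_nat_of_succ_le hwmono) hwnn (fun n => (hspos n).le)
    hεb hxQ (by simpa only [hpen 0] using hbdd)
    (fun n => by simpa only [hpen n] using hopt n xstar hxstarQ)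
    (exists_pos_le_step (hstep.imp_right fun ⟨ω, hω, _, hωpos, hs⟩ => ⟨ω, hω, hωpos, hs⟩))
  have hh : ∀ i, Tendsto (fun n => |h (xs n) i|) atTop (𝓝 0) := fun i => by
    simpa [violation] using (hres (.inl i)).abs
  have hg : ∀ j, Tendsto (fun n => max 0 (g (xs n) j)) atTop (𝓝 0) := fun j => by
    simpa [violation, max_comm] using hres (.inr j)
  simpa using (tendsto_finsetSum _ fun i _ => hh i).add (tendsto_finsetSum _ fun j _ => hg j)

/-- in the primal-dual rounded weighted ℓ₁-penalty method, if F(·, μ₀) is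
bounded below and either s_n ≥ s* > 0 or s_n ≥ ω(‖p_n‖) for a nondecreasing ω : ℝ₊ → ℝ₊
positive on (0, ∞), then the infeasibility measure Σᵢ|hᵢ(x_n)| + Σⱼ max{0, gⱼ(x_n)} → 0. -/
theorem rounded_weighted_penalty_infeasibility
    {X : Type*} [MetricSpace X] {m l : ℕ}
    (Q : Set X) (hQne : Q.Nonempty) (hQc : IsClosed Q)
    (f : X → ℝ) (h : X → Fin m → ℝ) (g : X → Fin l → ℝ)
    (hfeas : {x | x ∈ Q ∧ (∀ i, h x i = 0) ∧ ∀ j, g x j ≤ 0}.Nonempty)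
    (hfb : BddBelow (f '' {x | x ∈ Q ∧ (∀ i, h x i = 0) ∧ ∀ j, g x j ≤ 0}))
    (xs : ℕ → X) (us : ℕ → Fin m → ℝ) (vs : ℕ → Fin l → ℝ) (ws : ℕ → ℝ)
    (ss : ℕ → ℝ) (dus : ℕ → Fin m → ℝ) (dvs : ℕ → Fin l → ℝ) (εs : ℕ → ℝ)
    (hu0 : ∀ i, 0 ≤ us 0 i) (hv0 : ∀ j, 0 ≤ vs 0 j) (hw0 : 0 < ws 0)
    (hwmono : ∀ n, ws (n + 1) ≤ ws n) (hwnn : ∀ n, 0 ≤ ws n)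
    (hε0 : ∀ n, 0 ≤ εs n) (hεb : BddAbove (Set.range εs))
    (hspos : ∀ n, 0 < ss n) (hdu : ∀ n i, 0 ≤ dus n i) (hdv : ∀ n j, 0 ≤ dvs n j)
    (huupd : ∀ n i, us (n + 1) i = us n i + ss n * (eta (h (xs n) i) (ws n) + dus n i))
    (hvupd : ∀ n j, vs (n + 1) j = vs n j + ss n * (gam (g (xs n) j) (ws n) + dvs n j))
    (hxQ : ∀ n, xs n ∈ Q)
    (hbdd : BddBelow ((fun x => f x + ∑ i, us 0 i * eta (h x i) (ws 0)
        + ∑ j, vs 0 j * gam (g x j) (ws 0)) '' Q))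
    (hopt : ∀ n, ∀ x ∈ Q,
      f (xs n) + ∑ i, us n i * eta (h (xs n) i) (ws n)
          + ∑ j, vs n j * gam (g (xs n) j) (ws n) ≤
        f x + ∑ i, us n i * eta (h x i) (ws n)
          + ∑ j, vs n j * gam (g x j) (ws n) + εs n)
    (hstep : (∃ sstar : ℝ, 0 < sstar ∧ ∀ n, sstar ≤ ss n) ∨
      (∃ ω : ℝ → ℝ, MonotoneOn ω (Ici 0) ∧ (∀ t, 0 ≤ ω t) ∧ (∀ t, 0 < t → 0 < ω t) ∧
        ∀ n, ω (Real.sqrt (∑ i, (eta (h (xs n) i) (ws n)) ^ 2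
          + ∑ j, (gam (g (xs n) j) (ws n)) ^ 2)) ≤ ss n)) :
    Tendsto (fun n => ∑ i, |h (xs n) i| + ∑ j, max 0 (g (xs n) j)) atTop (𝓝 0) :=
  rounded_weighted_penalty_infeasibility_general Q f h g hfeas xs us vs ws ss dus dvs εs hu0 hv0
    hwmono hwnn hεb hspos hdu hdv huupd hvupd hxQ hbdd hopt hstep
end

section
/- Let Q be compact, h continuous on Q, and f and each gⱼ lower semicontinuous on Q. Then the perturbation function β(y) = inf{ f(x) : x ∈ Q, hᵢ(x) = yᵢ (i ≤ m), gⱼ(x) ≤ y_{m+j} (j ≤ ℓ) } is lower semicontinuous at the origin. -/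
open Filter Topology Metric Set

/-!
Fix a level `c` strictly below `β 0`. Every point of `Q` has a neighbourhood in `Q × (ℝᵐ × ℝˡ)`
on which no point that is feasible for the perturbed constraints has value `≤ c`: near a feasible
point this is lower semicontinuity of `f`; near an infeasible point, continuity of `h` and lower
semicontinuity of the `gⱼ` make every point infeasible for small perturbations. Compactness of
`Q` turns these neighbourhoods into a single neighbourhood of `0` on which `β > c`.
-/

/-- The lower half of Berge's maximum theorem, for a constraint with closed graph over `y₀`. -/
theorem lowerSemicontinuousAt_biInf_of_isCompact {X Y α : Type*} [TopologicalSpace X]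
    [TopologicalSpace Y] [CompleteLinearOrder α] [DenselyOrdered α] {K : Set X}
    (hK : IsCompact K) {f : X → α} (hf : LowerSemicontinuousOn f K) {C : Y → X → Prop} {y₀ : Y}
    (hC : ∀ x ∈ K, ¬ C y₀ x → ∀ᶠ p in 𝓝 y₀ ×ˢ 𝓝[K] x, ¬ C p.1 p.2) :
    LowerSemicontinuousAt (fun y => ⨅ x ∈ {x | x ∈ K ∧ C y x}, f x) y₀ := by
  intro b hb
  obtain ⟨c, hbc, hc⟩ := exists_between hb
  have hlocal : ∀ x ∈ K, ∀ᶠ p in 𝓝 y₀ ×ˢ 𝓝[K] x, C p.1 p.2 → c < f p.2 := by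
    intro x hx
    by_cases hCx : C y₀ x
    · have hcx : c < f x := hc.trans_le (biInf_le _ ⟨hx, hCx⟩)
      exact ((hf x hx c hcx).prod_inr _).mono fun p hp _ => hp
    · exact (hC x hx hCx).mono fun p hp hCp => absurd hCp hp
  have hnear : ∀ᶠ y in 𝓝 y₀, ∀ x ∈ K, x ∈ K → C y x → c < f x := by
    refine hK.eventually_forall_of_forall_eventually fun x hx => ?_
    have hx' := hlocal x hx
    rw [← nhdsWithin_univ, ← nhdsWithin_prod_eq, eventually_nhdsWithin_iff] at hx'
    exact hx'.mono fun p hp hpK => hp ⟨mem_univ _, hpK⟩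
  filter_upwards [hnear] with y hy
  exact hbc.trans_le (le_iInf₂ fun x hx => (hy x hx.1 hx.1 hx.2).le)

theorem eventually_ne_prod_nhdsWithin {X Y Z : Type*} [TopologicalSpace X] [TopologicalSpace Y]
    [TopologicalSpace Z] [T2Space Z] {K : Set X} {x : X} {y₀ : Y} {u : X → Z} {v : Y → Z}
    (hu : ContinuousWithinAt u K x) (hv : ContinuousAt v y₀) (hne : u x ≠ v y₀) :
    ∀ᶠ p in 𝓝 y₀ ×ˢ 𝓝[K] x, u p.2 ≠ v p.1 :=
  ((hu.tendsto.comp tendsto_snd).prodMk_nhds (hv.tendsto.comp tendsto_fst)).eventually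
    ((isOpen_ne_fun continuous_fst continuous_snd).eventually_mem hne)

theorem eventually_lt_prod_nhdsWithin {X Y Z : Type*} [TopologicalSpace X] [TopologicalSpace Y]
    [TopologicalSpace Z] [LinearOrder Z] [OrderTopology Z] [DenselyOrdered Z] {K : Set X} {x : X}
    {y₀ : Y} {u : X → Z} {v : Y → Z} (hu : LowerSemicontinuousWithinAt u K x)
    (hv : ContinuousAt v y₀) (hlt : v y₀ < u x) :
    ∀ᶠ p in 𝓝 y₀ ×ˢ 𝓝[K] x, v p.1 < u p.2 := by
  obtain ⟨c, hvc, hcu⟩ := exists_between hlt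
  exact ((hv.tendsto.eventually (eventually_lt_nhds hvc)).prod_inl _).and
    ((hu c hcu).prod_inr _) |>.mono fun _ hp => hp.1.trans hp.2

theorem perturbation_function_lsc_general
    {X : Type*} [MetricSpace X] {m l : ℕ}
    (Q : Set X) (hQcpt : IsCompact Q)
    (f : X → ℝ) (h : X → Fin m → ℝ) (g : X → Fin l → ℝ)
    (hh : ∀ i, ContinuousOn (fun x => h x i) Q)
    (hf : LowerSemicontinuousOn f Q)
    (hg : ∀ j, LowerSemicontinuousOn (fun x => g x j) Q)
    (β : (Fin m → ℝ) × (Fin l → ℝ) → EReal)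
    (hβ : β = fun y =>
      ⨅ x ∈ {x | x ∈ Q ∧ (∀ i, h x i = y.1 i) ∧ ∀ j, g x j ≤ y.2 j}, (f x : EReal)) :
    β 0 ≤ Filter.liminf β (𝓝[≠] (0 : (Fin m → ℝ) × (Fin l → ℝ))) := by
  have hβ_lsc : LowerSemicontinuousAt β 0 := by
    subst hβ
    refine lowerSemicontinuousAt_biInf_of_isCompact
      (C := fun (y : (Fin m → ℝ) × (Fin l → ℝ)) x => (∀ i, h x i = y.1 i) ∧ ∀ j, g x j ≤ y.2 j)
      hQcpt
      (continuous_coe_real_ereal.comp_lowerSemicontinuousOn hf EReal.coe_strictMono.monotone)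
      fun x hx hinfeasible => ?_
    have hcoord₁ (i : Fin m) : Continuous fun y : (Fin m → ℝ) × (Fin l → ℝ) => y.1 i := by fun_prop
    have hcoord₂ (j : Fin l) : Continuous fun y : (Fin m → ℝ) × (Fin l → ℝ) => y.2 j := by fun_prop
    rcases not_and_or.1 hinfeasible with hne | hgt
    · obtain ⟨i, hi⟩ := not_forall.1 hne
      filter_upwards [eventually_ne_prod_nhdsWithin (hh i x hx) (hcoord₁ i).continuousAt hi]
        with p hp hfeasible using hp (hfeasible.1 i)
    · obtain ⟨j, hj⟩ := not_forall.1 hgt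
      filter_upwards [eventually_lt_prod_nhdsWithin (hg j x hx) (hcoord₂ j).continuousAt
        (not_le.1 hj)]
        with p hp hfeasible using (hp.trans_le (hfeasible.2 j)).false
  exact (hβ_lsc.lowerSemicontinuousWithinAt _).le_liminf

/-- if Q is compact, h is continuous on Q, and f and each gⱼ are lsc on Q,
then the perturbation function
β(y) = inf{ f(x) : x ∈ Q, hᵢ(x) = yᵢ, gⱼ(x) ≤ y_{m+j} } is lsc at the origin:
β(0) ≤ liminf_{y → 0} β(y). -/
theorem perturbation_function_lsc
    {X : Type*} [MetricSpace X] {m l : ℕ}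
    (Q : Set X) (hQcpt : IsCompact Q) (hQne : Q.Nonempty)
    (f : X → ℝ) (h : X → Fin m → ℝ) (g : X → Fin l → ℝ)
    (hfeas : {x | x ∈ Q ∧ (∀ i, h x i = 0) ∧ ∀ j, g x j ≤ 0}.Nonempty)
    (hh : ∀ i, ContinuousOn (fun x => h x i) Q)
    (hf : LowerSemicontinuousOn f Q)
    (hg : ∀ j, LowerSemicontinuousOn (fun x => g x j) Q)
    (β : (Fin m → ℝ) × (Fin l → ℝ) → EReal)
    (hβ : β = fun y =>
      ⨅ x ∈ {x | x ∈ Q ∧ (∀ i, h x i = y.1 i) ∧ ∀ j, g x j ≤ y.2 j}, (f x : EReal)) :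
    β 0 ≤ Filter.liminf β (𝓝[≠] (0 : (Fin m → ℝ) × (Fin l → ℝ))) :=
  perturbation_function_lsc_general Q hQcpt f h g hh hf hg β hβ
end

section
/- Let Y be a Hilbert space, K ⊆ Y a closed convex cone, K* its polar cone, and λ ∈ K*, c > 0. If κ := ‖Π_{K*}(λ + cG(x)) − λ‖, then ‖Π_{K*}(G(x))‖² ≤ (2κ/c)‖Π_K(G(x))‖ + κ²/c², where Π_K and Π_{K*} are the metric projections onto K and K*. In particular, dist(G(x), K) = ‖Π_{K*}(G(x))‖ is small whenever κ/c is small and ‖Π_K(G(x))‖ is bounded. -/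
open Filter Topology Metric Set

open scoped RealInnerProductSpace

/-!
By Moreau's decomposition `Π_{K*} v = v - Π_K v`, which is orthogonal to `Π_K v`, so
`⟪v, Π_{K*} v⟫ = ‖Π_{K*} v‖²`. Since `K*` is a convex cone, `w + Π_{K*} v ∈ K*` for
`w = Π_{K*} (λ + c v)`, and the variational inequality of `w` at that point gives
`c ‖Π_{K*} v‖² ≤ ⟪w - λ, Π_{K*} v⟫ ≤ κ ‖Π_{K*} v‖`, hence even `‖Π_{K*} v‖ ≤ κ / c`.
-/

section NearestPoint

variable {E : Type*} [SeminormedAddCommGroup E]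

def IsNearestPoint (C : Set E) (y p : E) : Prop :=
  p ∈ C ∧ ∀ z ∈ C, ‖y - p‖ ≤ ‖y - z‖

theorem IsNearestPoint.infDist_eq {C : Set E} {y p : E} (h : IsNearestPoint C y p) :
    infDist y C = ‖y - p‖ := by
  refine le_antisymm ?_ ((le_infDist (s := C) ⟨p, h.1⟩).2 fun z hz => ?_)
  · simpa only [dist_eq_norm] using infDist_le_dist_of_mem h.1
  · simpa only [dist_eq_norm] using h.2 z hz

end NearestPoint

section InnerProductSpace

variable {E : Type*} [NormedAddCommGroup E] [InnerProductSpace ℝ E]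

def polarCone (K : Set E) : Set E :=
  {z | ∀ y ∈ K, ⟪z, y⟫ ≤ 0}

theorem convex_polarCone (K : Set E) : Convex ℝ (polarCone K) := by
  intro a ha b hb ta tb hta htb _ y hy
  rw [inner_add_left, real_inner_smul_left, real_inner_smul_left]
  nlinarith [ha y hy, hb y hy]

theorem add_mem_polarCone {K : Set E} {a b : E} (ha : a ∈ polarCone K) (hb : b ∈ polarCone K) :
    a + b ∈ polarCone K := fun y hy => by
  rw [inner_add_left]
  linarith [ha y hy, hb y hy]

theorem IsNearestPoint.real_inner_le_zero {C : Set E} (hC : Convex ℝ C) {y p : E}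
    (h : IsNearestPoint C y p) {z : E} (hz : z ∈ C) : ⟪y - p, z - p⟫ ≤ 0 := by
  have : Nonempty C := ⟨⟨p, h.1⟩⟩
  refine (norm_eq_iInf_iff_real_inner_le_zero hC h.1).1 ?_ z hz
  refine le_antisymm (le_ciInf fun w => h.2 w w.2) (ciInf_le ?_ (⟨p, h.1⟩ : C))
  exact ⟨0, by rintro _ ⟨w, rfl⟩; exact norm_nonneg _⟩

/-- Adding the two variational inequalities gives `‖q - s‖² ≤ 0`. -/
theorem eq_of_real_inner_sub_le_zero {y q s : E} (hq : ⟪y - q, s - q⟫ ≤ 0)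
    (hs : ⟪y - s, q - s⟫ ≤ 0) : q = s := by
  have hsum : ⟪y - q, s - q⟫ + ⟪y - s, q - s⟫ = ‖s - q‖ ^ 2 := by
    rw [← real_inner_self_eq_norm_sq, ← neg_sub s q, inner_neg_right, ← sub_eq_add_neg,
      ← inner_sub_left, sub_sub_sub_cancel_left]
  exact (sub_eq_zero.1 (norm_eq_zero.1 (pow_eq_zero_iff two_ne_zero |>.1
    (le_antisymm (hsum ▸ add_nonpos hq hs) (sq_nonneg _))))).symm

variable {K : Set E} {v p : E}

/-- Test the variational inequality at `0 • p` and `2 • p`. -/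
theorem IsNearestPoint.real_inner_sub_self_eq_zero (hK : Convex ℝ K)
    (hcone : ∀ a : ℝ, 0 ≤ a → ∀ y ∈ K, a • y ∈ K) (h : IsNearestPoint K v p) :
    ⟪v - p, p⟫ = 0 := by
  have h₀ := h.real_inner_le_zero hK (hcone 0 le_rfl p h.1)
  have h₂ := h.real_inner_le_zero hK (hcone 2 zero_le_two p h.1)
  rw [zero_smul, zero_sub, inner_neg_right] at h₀
  rw [two_smul, add_sub_cancel_right] at h₂
  linarith

theorem IsNearestPoint.sub_mem_polarCone (hK : Convex ℝ K)
    (hcone : ∀ a : ℝ, 0 ≤ a → ∀ y ∈ K, a • y ∈ K) (h : IsNearestPoint K v p) :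
    v - p ∈ polarCone K := fun y hy => by
  have hvi := h.real_inner_le_zero hK hy
  rw [inner_sub_right, h.real_inner_sub_self_eq_zero hK hcone, sub_zero] at hvi
  exact hvi

/-- Moreau decomposition: `Π_{K*} v = v - Π_K v`. -/
theorem IsNearestPoint.eq_sub_of_polarCone (hK : Convex ℝ K)
    (hcone : ∀ a : ℝ, 0 ≤ a → ∀ y ∈ K, a • y ∈ K) (h : IsNearestPoint K v p) {q : E}
    (hq : IsNearestPoint (polarCone K) v q) : q = v - p := by
  have hs := h.sub_mem_polarCone hK hcone
  refine eq_of_real_inner_sub_le_zero (hq.real_inner_le_zero (convex_polarCone K) hs) ?_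
  rw [sub_sub_cancel, inner_sub_right, real_inner_comm q p,
    real_inner_comm (v - p) p, h.real_inner_sub_self_eq_zero hK hcone, sub_zero]
  exact hq.1 p h.1

theorem IsNearestPoint.mul_norm_sub_le (hK : Convex ℝ K)
    (hcone : ∀ a : ℝ, 0 ≤ a → ∀ y ∈ K, a • y ∈ K) (h : IsNearestPoint K v p) {lam w : E} {c : ℝ}
    (hw : IsNearestPoint (polarCone K) (lam + c • v) w) : c * ‖v - p‖ ≤ ‖w - lam‖ := by
  have hs := h.sub_mem_polarCone hK hcone
  have hvi := hw.real_inner_le_zero (convex_polarCone K) (add_mem_polarCone hw.1 hs)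
  rw [add_sub_cancel_left] at hvi
  have hvs : ⟪v, v - p⟫ = ‖v - p‖ ^ 2 := by
    have hdiff : ⟪v, v - p⟫ - ⟪v - p, v - p⟫ = ⟪p, v - p⟫ := by
      rw [← inner_sub_left, sub_sub_cancel]
    rw [real_inner_comm (v - p) p, h.real_inner_sub_self_eq_zero hK hcone, sub_eq_zero] at hdiff
    rw [hdiff, real_inner_self_eq_norm_sq]
  have hsq : c * ‖v - p‖ ^ 2 ≤ ‖w - lam‖ * ‖v - p‖ := calc
    c * ‖v - p‖ ^ 2 = ⟪lam + c • v - w, v - p⟫ + ⟪w - lam, v - p⟫ := by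
      rw [← inner_add_left, show lam + c • v - w + (w - lam) = c • v by abel,
        real_inner_smul_left, hvs]
    _ ≤ ‖w - lam‖ * ‖v - p‖ := by linarith [real_inner_le_norm (w - lam) (v - p)]
  rcases (norm_nonneg (v - p)).eq_or_lt with hs0 | hs0
  · rw [← hs0, mul_zero]
    exact norm_nonneg _
  · nlinarith

end InnerProductSpace

theorem projection_infeasibility_estimate_general
    {Y : Type*} [NormedAddCommGroup Y] [InnerProductSpace ℝ Y]
    (K : Set Y) (hKconv : Convex ℝ K)
    (hKcone : ∀ a : ℝ, 0 ≤ a → ∀ y ∈ K, a • y ∈ K)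
    (Ks : Set Y) (hKs : Ks = {z : Y | ∀ y ∈ K, inner ℝ z y ≤ (0 : ℝ)})
    (projK projKs : Y → Y)
    (hprojK : ∀ y : Y, projK y ∈ K ∧ ∀ z ∈ K, ‖y - projK y‖ ≤ ‖y - z‖)
    (hprojKs : ∀ y : Y, projKs y ∈ Ks ∧ ∀ z ∈ Ks, ‖y - projKs y‖ ≤ ‖y - z‖)
    (lam : Y) (c : ℝ) (hc : 0 < c)
    (v : Y) (κ : ℝ) (hκ : κ = ‖projKs (lam + c • v) - lam‖) :
    ‖projKs v‖ ^ 2 ≤ (2 * κ / c) * ‖projK v‖ + κ ^ 2 / c ^ 2 ∧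
      infDist v K = ‖projKs v‖ := by
  subst hKs hκ
  have hp : IsNearestPoint K v (projK v) := hprojK v
  have hmoreau : projKs v = v - projK v := hp.eq_sub_of_polarCone hKconv hKcone (hprojKs v)
  have hbound : ‖projKs v‖ ≤ ‖projKs (lam + c • v) - lam‖ / c := by
    rw [hmoreau, le_div_iff₀ hc, mul_comm]
    exact hp.mul_norm_sub_le hKconv hKcone (hprojKs (lam + c • v))
  refine ⟨?_, hmoreau ▸ hp.infDist_eq⟩
  calc ‖projKs v‖ ^ 2 ≤ (‖projKs (lam + c • v) - lam‖ / c) ^ 2 := by gcongr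
    _ ≤ _ := by rw [div_pow]; exact le_add_of_nonneg_left (by positivity)

/-- in a Hilbert space with a closed convex cone K with polar cone K*,
given λ ∈ K*, c > 0, and κ = ‖Π_{K*}(λ + cv) − λ‖ (v = G(x)), the projections satisfy
‖Π_{K*}(v)‖² ≤ (2κ/c)‖Π_K(v)‖ + κ²/c², and dist(v, K) = ‖Π_{K*}(v)‖. -/
theorem projection_infeasibility_estimate
    {Y : Type*} [NormedAddCommGroup Y] [InnerProductSpace ℝ Y] [CompleteSpace Y]
    (K : Set Y) (hKc : IsClosed K) (hKconv : Convex ℝ K)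
    (hKcone : ∀ a : ℝ, 0 ≤ a → ∀ y ∈ K, a • y ∈ K) (hK0 : (0 : Y) ∈ K)
    (Ks : Set Y) (hKs : Ks = {z : Y | ∀ y ∈ K, inner ℝ z y ≤ (0 : ℝ)})
    (projK projKs : Y → Y)
    (hprojK : ∀ y : Y, projK y ∈ K ∧ ∀ z ∈ K, ‖y - projK y‖ ≤ ‖y - z‖)
    (hprojKs : ∀ y : Y, projKs y ∈ Ks ∧ ∀ z ∈ Ks, ‖y - projKs y‖ ≤ ‖y - z‖)
    (lam : Y) (hlam : lam ∈ Ks) (c : ℝ) (hc : 0 < c)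
    (v : Y) (κ : ℝ) (hκ : κ = ‖projKs (lam + c • v) - lam‖) :
    ‖projKs v‖ ^ 2 ≤ (2 * κ / c) * ‖projK v‖ + κ ^ 2 / c ^ 2 ∧
      infDist v K = ‖projKs v‖ :=
  projection_infeasibility_estimate_general K hKconv hKcone Ks hKs projK projKs hprojK hprojKs lam c
    hc v κ hκ
end
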